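/- The function Ṽ: R^2 → R given by Ṽ(z) = |z|^{-2}|log|z||^{-δ} for |z| ≤ 1/2 (extended by a compactly supported bounded function) with δ > 2 lies in the two-dimensional Kato class K_2: lim_{r→0} sup_{w∈R^2} ∫_{|z-w|≤r} Ṽ(z)|log(1/|z-w|)| dz = 0. -/

import Mathlib

/-!
Write `W(s) = s⁻² |log s|^(-δ)`, so `V(z) = W(|z|)` for `|z| ≤ 1/2`. In `t = -log s`,
`log W = 2t - δ log t`, so `W` is decreasing on `(0, s₀]`, `s₀ = e^(-δ/2)`. Hence, for
`u = |y - x| ≤ 1` and `|y| ≤ s₀`, the smaller of `u` and `|y|` carries the singularity: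
`|log u| W(|y|) ≤ ψ(u) + ψ(|y|)` with `ψ(s) = 1_{s ≤ s₀} |log s| W(s)`; for `|y| > s₀`, `V` is
bounded by some `K`. Thus the integrand is at most `F(y - x) + G(y)`, with
`F(w) = K |log |w|| + ψ(|w|)` integrable near `0` and `G(y) = ψ(|y|)` integrable on the plane
(`∫₀^{s₀} s⁻¹ |log s|^(1-δ) ds < ∞` because `δ > 2`). Absolute continuity of the integral
then makes `∫_{B(x,r)}` small uniformly in `x`, as `|B(x, r)| → 0` uniformly.
-/

open MeasureTheory Filter Metric Set Real
open scoped ENNReal Topology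

noncomputable section

def radialPotential (δ s : ℝ) : ℝ := s ^ (-2 : ℝ) * |log s| ^ (-δ)

def logWeightedPotential (δ : ℝ) : ℝ → ℝ :=
  (Iic (exp (-(δ / 2)))).indicator fun s => |log s| * radialPotential δ s

theorem radialPotential_nonneg (δ s : ℝ) : 0 ≤ radialPotential δ s := by
  have hsq : s ^ (-2 : ℝ) = (s ^ 2)⁻¹ := by
    rw [show (-2 : ℝ) = ((-2 : ℤ) : ℝ) by norm_num, rpow_intCast, zpow_neg, zpow_ofNat]
  rw [radialPotential, hsq]
  positivity

theorem logWeightedPotential_nonneg (δ s : ℝ) : 0 ≤ logWeightedPotential δ s :=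
  indicator_nonneg (fun s _ => mul_nonneg (abs_nonneg _) (radialPotential_nonneg δ s)) s

theorem radialPotential_eq_exp {δ s : ℝ} (hs0 : 0 < s) (hs1 : s < 1) :
    radialPotential δ s = exp (2 * -log s - δ * log (-log s)) := by
  have hlog : 0 < -log s := neg_pos.2 (log_neg hs0 hs1)
  rw [radialPotential, abs_of_neg (neg_pos.1 hlog), rpow_def_of_pos hs0, rpow_def_of_pos hlog,
    ← exp_add]
  ring_nf

theorem monotoneOn_two_mul_sub_mul_log {δ : ℝ} (hδ : 0 < δ) :
    MonotoneOn (fun t => 2 * t - δ * log t) (Ici (δ / 2)) := by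
  intro u (hu : δ / 2 ≤ u) t _ hut
  have hu0 : 0 < u := by linarith
  have hlog : log t - log u ≤ t / u - 1 := by
    rw [← log_div (by linarith) hu0.ne']
    exact log_le_sub_one_of_pos (div_pos (hu0.trans_le hut) hu0)
  have hdiv : δ * (t / u - 1) ≤ 2 * (t - u) := by
    rw [show δ * (t / u - 1) = δ / u * (t - u) by field_simp]
    exact mul_le_mul_of_nonneg_right ((div_le_iff₀ hu0).2 (by linarith)) (by linarith)
  dsimp only
  nlinarith [mul_le_mul_of_nonneg_left hlog hδ.le]

theorem radialPotential_antitoneOn {δ : ℝ} (hδ : 0 < δ) :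
    AntitoneOn (radialPotential δ) (Ioc 0 (exp (-(δ / 2)))) := by
  intro a ⟨ha0, ha⟩ b ⟨hb0, hb⟩ hab
  have hb1 : b < 1 := hb.trans_lt (exp_lt_one_iff.2 (by linarith))
  have hmem : ∀ s, 0 < s → s ≤ exp (-(δ / 2)) → -log s ∈ Ici (δ / 2) := fun s hs0 hs => by
    have := log_le_log hs0 hs
    rw [log_exp] at this
    exact show δ / 2 ≤ -log s by linarith
  rw [radialPotential_eq_exp ha0 (hab.trans_lt hb1), radialPotential_eq_exp hb0 hb1, exp_le_exp]
  exact monotoneOn_two_mul_sub_mul_log hδ (hmem b hb0 hb) (hmem a ha0 ha)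
    (neg_le_neg (log_le_log ha0 hab))

theorem abs_log_mul_radialPotential_le {δ u s : ℝ} (hδ : 0 < δ) (hu0 : 0 ≤ u) (hu1 : u ≤ 1)
    (hs0 : 0 ≤ s) (hs : s ≤ exp (-(δ / 2))) :
    |log u| * radialPotential δ s ≤ logWeightedPotential δ u + logWeightedPotential δ s := by
  have hψu := logWeightedPotential_nonneg δ u
  have hψs := logWeightedPotential_nonneg δ s
  rcases le_or_gt u s with hus | hsu
  · rcases hu0.eq_or_lt with rfl | hu0
    · simpa using add_nonneg hψu hψs
    have hψ : logWeightedPotential δ u = |log u| * radialPotential δ u :=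
      indicator_of_mem (mem_Iic.2 (hus.trans hs)) _
    have := radialPotential_antitoneOn hδ ⟨hu0, hus.trans hs⟩ ⟨hu0.trans_le hus, hs⟩ hus
    nlinarith [abs_nonneg (log u)]
  · rcases hs0.eq_or_lt with rfl | hs0
    · simpa [radialPotential] using add_nonneg hψu hψs
    have hψ : logWeightedPotential δ s = |log s| * radialPotential δ s :=
      indicator_of_mem (mem_Iic.2 hs) _
    have hlog : |log u| ≤ |log s| := by
      rw [abs_of_nonpos (log_nonpos (hs0.trans hsu).le hu1),
        abs_of_nonpos (log_nonpos hs0.le (hsu.le.trans hu1))]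
      exact neg_le_neg (log_le_log hs0 hsu.le)
    nlinarith [radialPotential_nonneg δ s]

theorem radialPotential_le {δ a s : ℝ} (hδ : 0 ≤ δ) (ha : 0 < a) (has : a ≤ s) (hs : s ≤ 1 / 2) :
    radialPotential δ s ≤ a ^ (-2 : ℝ) * log 2 ^ (-δ) := by
  have hlog2 : log 2 ≤ |log s| := by
    have := log_le_log (ha.trans_le has) hs
    rw [one_div, log_inv] at this
    exact (le_neg.1 this).trans (neg_le_abs _)
  exact mul_le_mul (rpow_le_rpow_of_nonpos ha has (by norm_num))
    (rpow_le_rpow_of_nonpos (log_pos one_lt_two) hlog2 (neg_nonpos.2 hδ)) (by positivity)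
    (by positivity)

theorem integrableOn_inv_mul_abs_log_rpow {p a : ℝ} (hp : p < -1) (ha : 0 < a) :
    IntegrableOn (fun s => s⁻¹ * |log s| ^ p) (Ioo 0 (exp (-a))) := by
  have himg : (fun u => exp (-u)) '' Ioi a = Ioo 0 (exp (-a)) := by
    rw [show (fun u => exp (-u)) = exp ∘ Neg.neg from rfl, image_comp, image_neg_Ioi,
      image_exp_Iio]
  rw [← himg, integrableOn_image_iff_integrableOn_abs_deriv_smul measurableSet_Ioi
    (fun u _ => ((hasDerivAt_neg u).exp).hasDerivWithinAt)
    (fun u _ v _ h => neg_injective (exp_injective h))]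
  refine (integrableOn_Ioi_rpow_of_lt hp ha).congr_fun (fun u (hu : a < u) => ?_) measurableSet_Ioi
  have hu0 : 0 < u := ha.trans hu
  simp [log_exp, abs_of_pos hu0, exp_neg]

theorem mul_abs_log_mul_radialPotential {δ s : ℝ} (hs0 : 0 < s) (hs1 : s < 1) :
    s * (|log s| * radialPotential δ s) = s⁻¹ * |log s| ^ (1 - δ) := by
  have hlog : 0 < |log s| := abs_pos.2 (log_neg hs0 hs1).ne
  rw [radialPotential, sub_eq_add_neg, rpow_add hlog, rpow_one, rpow_neg hs0.le, rpow_two]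
  field_simp

theorem setLIntegral_ball_comp_sub_center {G : Type*} [NormedAddCommGroup G] [MeasurableSpace G]
    [BorelSpace G] (μ : Measure G) [μ.IsAddRightInvariant] (f : G → ℝ≥0∞) (x : G) (r : ℝ) :
    ∫⁻ y in ball x r, f (y - x) ∂μ = ∫⁻ w in ball 0 r, f w ∂μ := by
  have hball : ball x r = (· - x) ⁻¹' ball 0 r := by
    ext y; simp [dist_eq_norm]
  rw [hball]
  exact (measurePreserving_sub_right μ x).setLIntegral_comp_preimage_emb
    (measurableEmbedding_subRight x) f _

section AddHaar

variable {E : Type*} [NormedAddCommGroup E] [NormedSpace ℝ E] [FiniteDimensional ℝ E]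
  [MeasurableSpace E] [BorelSpace E] [Nontrivial E] (μ : Measure E) [μ.IsAddHaarMeasure]

theorem tendsto_addHaar_ball_zero (x : E) :
    Tendsto (fun r : ℝ => μ (ball x r)) (𝓝[>] 0) (𝓝 0) := by
  have hpow : Tendsto (fun r : ℝ => ENNReal.ofReal (r ^ Module.finrank ℝ E) * μ (ball 0 1))
      (𝓝 0) (𝓝 0) := by
    have := ENNReal.Tendsto.mul_const ((ENNReal.continuous_ofReal.comp
      (continuous_pow (Module.finrank ℝ E))).tendsto 0)
      (Or.inr (measure_ball_lt_top (μ := μ) (x := 0) (r := 1)).ne)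
    simpa [Module.finrank_pos.ne'] using this
  refine (hpow.mono_left nhdsWithin_le_nhds).congr' ?_
  filter_upwards [self_mem_nhdsWithin] with r hr
  exact (μ.addHaar_ball x (le_of_lt hr)).symm

theorem tendsto_iSup_setLIntegral_ball {f : E → ℝ≥0∞} (hf : ∫⁻ x, f x ∂μ ≠ ∞) :
    Tendsto (fun r : ℝ => ⨆ x, ∫⁻ y in ball x r, f y ∂μ) (𝓝[>] 0) (𝓝 0) := by
  rw [ENNReal.tendsto_nhds_zero]
  intro ε hε
  obtain ⟨η, hη, hsmall⟩ := exists_pos_setLIntegral_lt_of_measure_lt hf hε.ne'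
  filter_upwards [(tendsto_addHaar_ball_zero μ 0).eventually (gt_mem_nhds hη)] with r hr
  exact iSup_le fun x => (hsmall _ (by rwa [μ.addHaar_ball_center])).le

theorem tendsto_iSup_setLIntegral_ball_of_le {k : E → E → ℝ≥0∞} {f g : E → ℝ} {ρ : ℝ}
    (hρ : 0 < ρ) (hf : IntegrableOn f (ball 0 ρ) μ) (hg : Integrable g μ)
    (hk : ∀ x y, dist y x < ρ → k x y ≤ ENNReal.ofReal (f (y - x) + g y)) :
    Tendsto (fun r : ℝ => ⨆ x, ∫⁻ y in ball x r, k x y ∂μ) (𝓝[>] 0) (𝓝 0) := by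
  set F : E → ℝ≥0∞ := (ball 0 ρ).indicator fun w => ENNReal.ofReal (f w)
  set G : E → ℝ≥0∞ := fun y => ENNReal.ofReal (g y)
  have hF : ∫⁻ w, F w ∂μ ≠ ∞ := by
    rw [lintegral_indicator measurableSet_ball]
    exact hf.lintegral_lt_top.ne
  have hG : ∫⁻ y, G y ∂μ ≠ ∞ := hg.lintegral_lt_top.ne
  have hbound : ∀ r ∈ Ioc 0 ρ, ∀ x, ∫⁻ y in ball x r, k x y ∂μ ≤
      (⨆ z, ∫⁻ y in ball z r, F y ∂μ) + ⨆ z, ∫⁻ y in ball z r, G y ∂μ := by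
    intro r hr x
    have hkF : ∀ y ∈ ball x r, k x y ≤ F (y - x) + G y := by
      intro y hy
      have hyx : y - x ∈ ball 0 ρ := by
        rw [mem_ball_zero_iff, ← dist_eq_norm]; exact (mem_ball.1 hy).trans_le hr.2
      calc k x y ≤ ENNReal.ofReal (f (y - x) + g y) := hk x y ((mem_ball.1 hy).trans_le hr.2)
        _ ≤ ENNReal.ofReal (f (y - x)) + G y := ENNReal.ofReal_add_le
        _ = F (y - x) + G y := by simp only [F, indicator_of_mem hyx]
    calc ∫⁻ y in ball x r, k x y ∂μ ≤ ∫⁻ y in ball x r, (F (y - x) + G y) ∂μ :=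
          setLIntegral_mono' measurableSet_ball hkF
      _ = ∫⁻ w in ball 0 r, F w ∂μ + ∫⁻ y in ball x r, G y ∂μ := by
          rw [lintegral_add_right' _ hg.aestronglyMeasurable.aemeasurable.ennreal_ofReal.restrict,
            setLIntegral_ball_comp_sub_center]
      _ ≤ _ := add_le_add (le_iSup (fun z => ∫⁻ y in ball z r, F y ∂μ) 0)
          (le_iSup (fun z => ∫⁻ y in ball z r, G y ∂μ) x)
  have hlim := (tendsto_iSup_setLIntegral_ball μ hF).add (tendsto_iSup_setLIntegral_ball μ hG)
  rw [add_zero] at hlim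
  refine tendsto_of_tendsto_of_tendsto_of_le_of_le' tendsto_const_nhds hlim
    (.of_forall fun r => zero_le) ?_
  filter_upwards [Ioc_mem_nhdsGT hρ] with r hr
  exact iSup_le (hbound r hr)

theorem integrableOn_ball_abs_log_norm : IntegrableOn (fun w : E => |log ‖w‖|) (ball 0 1) μ := by
  refine integrableOn_ball_of_norm_le_rpow (C := 2) (α := 1 / 2) Module.finrank_pos
    (lt_of_lt_of_le (by norm_num) (Nat.one_le_cast.2 Module.finrank_pos)) ?_
    measurable_norm.log.abs.aestronglyMeasurable
  filter_upwards [ae_restrict_mem measurableSet_ball] with w hw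
  rw [Real.norm_eq_abs, abs_abs, rpow_neg (norm_nonneg w)]
  rcases (norm_nonneg w).eq_or_lt with h0 | h0
  · simp [← h0]
  have hlt := abs_log_mul_self_rpow_lt ‖w‖ (1 / 2) h0 (mem_ball_zero_iff.1 hw).le (by norm_num)
  rw [abs_mul, abs_of_pos (rpow_pos_of_pos h0 _)] at hlt
  rw [← div_eq_mul_inv, le_div_iff₀ (rpow_pos_of_pos h0 _)]
  linarith

theorem integrable_logWeightedPotential_norm (hE : Module.finrank ℝ E = 2) {δ : ℝ} (hδ : 2 < δ) :
    Integrable (fun w : E => logWeightedPotential δ ‖w‖) μ := by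
  set c := exp (-(δ / 2))
  have hc1 : c < 1 := exp_lt_one_iff.2 (by linarith)
  have hradial : IntegrableOn (fun s => s⁻¹ * |log s| ^ (1 - δ)) (Ioc 0 c) :=
    (integrableOn_Ioc_iff_integrableOn_Ioo enorm_ne_top).2
      (integrableOn_inv_mul_abs_log_rpow (by linarith) (by linarith))
  rw [integrable_fun_norm_addHaar μ, hE]
  refine (hradial.integrable_indicator measurableSet_Ioc).integrableOn.congr_fun
    (fun y (hy : 0 < y) => ?_) measurableSet_Ioi
  rcases le_or_gt y c with hyc | hcy
  · rw [indicator_of_mem (show y ∈ Ioc 0 c from ⟨hy, hyc⟩), logWeightedPotential,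
      indicator_of_mem (mem_Iic.2 hyc), smul_eq_mul, pow_one,
      mul_abs_log_mul_radialPotential hy (hyc.trans_lt hc1)]
  · rw [indicator_of_notMem (fun h => (h.2.trans_lt hcy).false), logWeightedPotential,
      indicator_of_notMem (fun h => (mem_Iic.1 h).not_gt hcy), smul_zero]

end AddHaar

theorem abs_log_mul_abs_le {E : Type*} [SeminormedAddCommGroup E] {V : E → ℝ} {δ K : ℝ}
    (hδ : 0 < δ) (hV : ∀ z, ‖z‖ ≤ exp (-(δ / 2)) → V z = radialPotential δ ‖z‖)
    (hK0 : 0 ≤ K) (hK : ∀ z, exp (-(δ / 2)) < ‖z‖ → |V z| ≤ K) {u : ℝ} (hu0 : 0 ≤ u)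
    (hu1 : u ≤ 1) (y : E) :
    |log u| * |V y| ≤ K * |log u| + logWeightedPotential δ u + logWeightedPotential δ ‖y‖ := by
  have hKu : 0 ≤ K * |log u| := mul_nonneg hK0 (abs_nonneg _)
  have hψu := logWeightedPotential_nonneg δ u
  have hψy := logWeightedPotential_nonneg δ ‖y‖
  rcases le_or_gt ‖y‖ (exp (-(δ / 2))) with hy | hy
  · rw [hV y hy, abs_of_nonneg (radialPotential_nonneg _ _)]
    linarith [abs_log_mul_radialPotential_le hδ hu0 hu1 (norm_nonneg y) hy]
  · linarith [mul_le_mul_of_nonneg_left (hK y hy) (abs_nonneg (log u))]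

end

theorem example_potential_in_K2_general (δ : ℝ) (hδ : 2 < δ)
    (V : EuclideanSpace ℝ (Fin 2) → ℝ)
    (hVform : ∀ z : EuclideanSpace ℝ (Fin 2), ‖z‖ ≤ 1 / 2 →
      V z = ‖z‖ ^ (-(2 : ℝ)) * |Real.log ‖z‖| ^ (-δ))
    (hVbdd : ∃ M : ℝ, ∀ z : EuclideanSpace ℝ (Fin 2), 1 / 2 < ‖z‖ → |V z| ≤ M) :
    Tendsto
      (fun r : ℝ => ⨆ x : EuclideanSpace ℝ (Fin 2),
        ∫⁻ y in ball x r, ENNReal.ofReal (|Real.log (1 / ‖x - y‖)| * |V y|))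
      (nhdsWithin 0 (Set.Ioi 0)) (nhds 0) := by
  set s₀ := exp (-(δ / 2))
  have hs₀ : s₀ ≤ 1 / 2 := (exp_le_exp.2 (by linarith)).trans exp_neg_one_lt_half.le
  obtain ⟨M, hM⟩ := hVbdd
  set K := max M (s₀ ^ (-2 : ℝ) * log 2 ^ (-δ))
  have hK : ∀ z : EuclideanSpace ℝ (Fin 2), s₀ < ‖z‖ → |V z| ≤ K := by
    intro z hz
    rcases le_or_gt ‖z‖ (1 / 2) with h | h
    · rw [hVform z h, ← radialPotential, abs_of_nonneg (radialPotential_nonneg _ _)]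
      exact le_max_of_le_right (radialPotential_le (by linarith) (exp_pos _) hz.le h)
    · exact le_max_of_le_left (hM z h)
  have hψ := integrable_logWeightedPotential_norm volume finrank_euclideanSpace_fin hδ
  refine tendsto_iSup_setLIntegral_ball_of_le volume one_pos
    (((integrableOn_ball_abs_log_norm volume).const_mul K).add hψ.integrableOn) hψ
    fun x y hxy => ENNReal.ofReal_le_ofReal ?_
  rw [one_div, log_inv, abs_neg, norm_sub_rev, Pi.add_apply]
  exact abs_log_mul_abs_le (by linarith) (fun z hz => hVform z (hz.trans hs₀))
    (le_max_of_le_right (by positivity)) hK (norm_nonneg _) (dist_eq_norm y x ▸ hxy.le) y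

/-- The function `Ṽ(z) = |z|^{-2} |log|z||^{-δ}` near the origin (extended by a bounded,
compactly supported function) with `δ > 2` lies in the two-dimensional Kato class `K_2`. -/
theorem example_potential_in_K2 (δ : ℝ) (hδ : 2 < δ)
    (V : EuclideanSpace ℝ (Fin 2) → ℝ)
    (hVform : ∀ z : EuclideanSpace ℝ (Fin 2), ‖z‖ ≤ 1 / 2 →
      V z = ‖z‖ ^ (-(2 : ℝ)) * |Real.log ‖z‖| ^ (-δ))
    (hVbdd : ∃ M : ℝ, ∀ z : EuclideanSpace ℝ (Fin 2), 1 / 2 < ‖z‖ → |V z| ≤ M)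
    (hsupp : HasCompactSupport V) :
    Tendsto
      (fun r : ℝ => ⨆ x : EuclideanSpace ℝ (Fin 2),
        ∫⁻ y in ball x r, ENNReal.ofReal (|Real.log (1 / ‖x - y‖)| * |V y|))
      (nhdsWithin 0 (Set.Ioi 0)) (nhds 0) :=
  example_potential_in_K2_general δ hδ V hVform hVbdd
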